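/- (Small set closure) Let g : ℕ → ℕ, let σ be a string, and let B be a set of strings. Define the g-closure of B as C = {τ : B is g-big above τ}. If B is g-small above σ, then C is g-small above σ. -/

import Mathlib

/-!
Take a finite `h`-bushy tree `T` above `σ` whose leaves lie in the closure, and onto each leaf `τ`
graft a finite `h`-bushy tree above `τ` with leaves in `B`. Distinct leaves of `T` are
incomparable, so the grafted trees do not interfere with each other or with `T`, and the result is
a finite `h`-bushy tree above `σ` with leaves in `B`. Hence `B` is big wherever its closure is.
-/

/-- A tree is a set of strings (finite sequences of naturals) closed under prefixes. -/
def IsTree (T : Set (List ℕ)) : Prop :=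
  ∀ σ ∈ T, ∀ τ : List ℕ, τ <+: σ → τ ∈ T

/-- A leaf of `T` is an element of `T` with no immediate extension in `T`. -/
def IsLeaf (T : Set (List ℕ)) (τ : List ℕ) : Prop :=
  τ ∈ T ∧ ∀ a : ℕ, τ ++ [a] ∉ T

/-- A tree `T` is `h`-bushy above `σ`: `σ ∈ T`, every element of `T` is comparable
with `σ`, and every non-leaf `τ ∈ T` extending `σ` has at least `h |τ|` immediate
extensions in `T`. -/
def BushyAbove (h : ℕ → ℕ) (σ : List ℕ) (T : Set (List ℕ)) : Prop :=
  IsTree T ∧ σ ∈ T ∧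
  (∀ τ ∈ T, τ <+: σ ∨ σ <+: τ) ∧
  (∀ τ ∈ T, σ <+: τ → ¬ IsLeaf T τ → (h τ.length : ℕ∞) ≤ {a : ℕ | τ ++ [a] ∈ T}.encard)

/-- `B` is `h`-big above `σ` if there is a finite tree, `h`-bushy above `σ`,
all of whose leaves belong to `B`. -/
def BigAbove (h : ℕ → ℕ) (σ : List ℕ) (B : Set (List ℕ)) : Prop :=
  ∃ T : Set (List ℕ), T.Finite ∧ BushyAbove h σ T ∧ ∀ τ, IsLeaf T τ → τ ∈ B

/-- `B` is `h`-small above `σ` if it is not `h`-big above `σ`. -/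
def SmallAbove (h : ℕ → ℕ) (σ : List ℕ) (B : Set (List ℕ)) : Prop :=
  ¬ BigAbove h σ B

lemma List.exists_concat_prefix_of_prefix_of_ne {α : Type*} {τ σ : List α} (h : τ <+: σ)
    (hne : τ ≠ σ) : ∃ a, τ ++ [a] <+: σ := by
  obtain ⟨ρ, rfl⟩ := h
  cases ρ with
  | nil => simp at hne
  | cons a ρ => exact ⟨a, ρ, by simp⟩

section Leaves

variable {T U : Set (List ℕ)} {τ ρ : List ℕ}

lemma IsLeaf.eq_of_prefix (hT : IsTree T) (hτ : IsLeaf T τ) (hρ : ρ ∈ T) (h : τ <+: ρ) :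
    ρ = τ := by
  by_contra hne
  obtain ⟨a, ha⟩ := List.exists_concat_prefix_of_prefix_of_ne h (Ne.symm hne)
  exact hτ.2 a (hT ρ hρ _ ha)

lemma IsLeaf.of_subset (hρ : IsLeaf U ρ) (hTU : T ⊆ U) (hρT : ρ ∈ T) : IsLeaf T ρ :=
  ⟨hρT, fun a ha => hρ.2 a (hTU ha)⟩

lemma BushyAbove.prefix_of_isLeaf {h : ℕ → ℕ} {σ : List ℕ} (hT : BushyAbove h σ T)
    (hτ : IsLeaf T τ) : σ <+: τ := by
  rcases hT.2.2.1 τ hτ.1 with hτσ | hστ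
  · rw [hτ.eq_of_prefix hT.1 hT.2.1 hτσ]
  · exact hστ

end Leaves

def graft (T : Set (List ℕ)) (S : List ℕ → Set (List ℕ)) : Set (List ℕ) :=
  T ∪ ⋃ τ ∈ {τ | IsLeaf T τ}, S τ

section Graft

variable {h : ℕ → ℕ} {σ τ τ' ρ : List ℕ} {T : Set (List ℕ)} {S : List ℕ → Set (List ℕ)}

lemma mem_graft : ρ ∈ graft T S ↔ ρ ∈ T ∨ ∃ τ, IsLeaf T τ ∧ ρ ∈ S τ := by
  simp [graft]

lemma subset_graft : T ⊆ graft T S :=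
  Set.subset_union_left

lemma subset_graft_of_isLeaf (hτ : IsLeaf T τ) : S τ ⊆ graft T S :=
  fun _ hρ => mem_graft.2 (Or.inr ⟨τ, hτ, hρ⟩)

lemma Set.Finite.graft (hT : T.Finite) (hS : ∀ τ, IsLeaf T τ → (S τ).Finite) :
    (graft T S).Finite :=
  hT.union (Set.Finite.biUnion (hT.subset fun _ hτ => hτ.1) hS)

lemma isTree_graft (hT : IsTree T) (hS : ∀ τ, IsLeaf T τ → IsTree (S τ)) :
    IsTree (graft T S) := by
  intro ρ hρ π hπ
  rcases mem_graft.1 hρ with hρT | ⟨τ, hτ, hρS⟩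
  · exact subset_graft (hT ρ hρT π hπ)
  · exact subset_graft_of_isLeaf hτ (hS τ hτ ρ hρS π hπ)

lemma IsLeaf.eq_of_prefix_of_mem (hT : IsTree T)
    (hS : ∀ τ, IsLeaf T τ → ∀ ρ ∈ S τ, ρ <+: τ ∨ τ <+: ρ)
    (hτ : IsLeaf T τ) (hτ' : IsLeaf T τ') (hρ : ρ ∈ S τ') (hτρ : τ <+: ρ) : τ = τ' := by
  have leaf_eq : ∀ {τ₁ τ₂}, IsLeaf T τ₁ → IsLeaf T τ₂ → τ₁ <+: τ₂ → τ₁ = τ₂ :=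
    fun h₁ h₂ h₁₂ => (h₁.eq_of_prefix hT h₂.1 h₁₂).symm
  rcases hS τ' hτ' ρ hρ with hρτ' | hτ'ρ
  · exact leaf_eq hτ hτ' (hτρ.trans hρτ')
  · rcases List.prefix_or_prefix_of_prefix hτρ hτ'ρ with hττ' | hτ'τ
    · exact leaf_eq hτ hτ' hττ'
    · exact (leaf_eq hτ' hτ hτ'τ).symm

lemma isLeaf_graft (hT : IsTree T) (hS : ∀ τ, IsLeaf T τ → ∀ ρ ∈ S τ, ρ <+: τ ∨ τ <+: ρ)
    (hτ : IsLeaf T τ) (hτρ : τ <+: ρ) (hρ : IsLeaf (S τ) ρ) : IsLeaf (graft T S) ρ := by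
  refine ⟨subset_graft_of_isLeaf hτ hρ.1, fun a ha => ?_⟩
  rcases mem_graft.1 ha with haT | ⟨τ', hτ', haS⟩
  · have hρτ : ρ = τ := hτ.eq_of_prefix hT (hT _ haT ρ (List.prefix_append ρ [a])) hτρ
    subst hρτ
    exact hτ.2 a haT
  · obtain rfl := hτ.eq_of_prefix_of_mem hT hS hτ' haS (hτρ.trans (List.prefix_append ρ [a]))
    exact hρ.2 a haS

lemma exists_isLeaf_of_isLeaf_graft (hS : ∀ τ, IsLeaf T τ → τ ∈ S τ)
    (hρ : IsLeaf (graft T S) ρ) : ∃ τ, IsLeaf T τ ∧ IsLeaf (S τ) ρ := by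
  rcases mem_graft.1 hρ.1 with hρT | ⟨τ, hτ, hρS⟩
  · have hρ' : IsLeaf T ρ := hρ.of_subset subset_graft hρT
    exact ⟨ρ, hρ', hρ.of_subset (subset_graft_of_isLeaf hρ') (hS ρ hρ')⟩
  · exact ⟨τ, hτ, hρ.of_subset (subset_graft_of_isLeaf hτ) hρS⟩

lemma bushyAbove_graft (hT : BushyAbove h σ T) (hS : ∀ τ, IsLeaf T τ → BushyAbove h τ (S τ)) :
    BushyAbove h σ (graft T S) := by
  have hσleaf : ∀ τ, IsLeaf T τ → σ <+: τ := fun _ => hT.prefix_of_isLeaf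
  obtain ⟨hTtree, hσT, hTcomp, hTbushy⟩ := hT
  have hScomp : ∀ τ, IsLeaf T τ → ∀ ρ ∈ S τ, ρ <+: τ ∨ τ <+: ρ := fun τ hτ => (hS τ hτ).2.2.1
  refine ⟨isTree_graft hTtree fun τ hτ => (hS τ hτ).1, subset_graft hσT, ?_, ?_⟩
  · intro ρ hρ
    rcases mem_graft.1 hρ with hρT | ⟨τ, hτ, hρS⟩
    · exact hTcomp ρ hρT
    · have hστ := hσleaf τ hτ
      rcases hScomp τ hτ ρ hρS with hρτ | hτρ
      · exact List.prefix_or_prefix_of_prefix hρτ hστ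
      · exact Or.inr (hστ.trans hτρ)
  · intro ρ hρ hσρ hρleaf
    have above_leaf : ∀ τ, IsLeaf T τ → ρ ∈ S τ → τ <+: ρ →
        (h ρ.length : ℕ∞) ≤ {a : ℕ | ρ ++ [a] ∈ graft T S}.encard := fun τ hτ hρS hτρ =>
      ((hS τ hτ).2.2.2 ρ hρS hτρ fun hρS' => hρleaf (isLeaf_graft hTtree hScomp hτ hτρ hρS')).trans
        (Set.encard_le_encard fun _ ha => subset_graft_of_isLeaf hτ ha)
    by_cases hρT : ρ ∈ T
    · by_cases hρT' : IsLeaf T ρ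
      · exact above_leaf ρ hρT' (hS ρ hρT').2.1 (List.prefix_refl ρ)
      · exact (hTbushy ρ hρT hσρ hρT').trans
          (Set.encard_le_encard fun _ ha => subset_graft ha)
    · obtain ⟨τ, hτ, hρS⟩ := (mem_graft.1 hρ).resolve_left hρT
      have hτρ : τ <+: ρ :=
        (hScomp τ hτ ρ hρS).resolve_left fun hρτ => hρT (hTtree τ hτ.1 ρ hρτ)
      exact above_leaf τ hτ hρS hτρ

end Graft

def bigClosure (h : ℕ → ℕ) (B : Set (List ℕ)) : Set (List ℕ) :=
  {τ | BigAbove h τ B}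

lemma BigAbove.of_bigClosure {h : ℕ → ℕ} {σ : List ℕ} {B : Set (List ℕ)}
    (hC : BigAbove h σ (bigClosure h B)) : BigAbove h σ B := by
  obtain ⟨T, hTfin, hT, hTleaves⟩ := hC
  choose! S hSfin hS hSleaves using hTleaves
  refine ⟨graft T S, hTfin.graft hSfin, bushyAbove_graft hT hS, fun ρ hρ => ?_⟩
  obtain ⟨τ, hτ, hρτ⟩ := exists_isLeaf_of_isLeaf_graft (fun τ hτ => (hS τ hτ).2.1) hρ
  exact hSleaves τ hτ ρ hρτ

/-- Small set closure: if `B` is `g`-small above `σ`, then its `g`-closure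
`{τ | B is g-big above τ}` is also `g`-small above `σ`. -/
theorem small_set_closure (g : ℕ → ℕ) (σ : List ℕ) (B : Set (List ℕ))
    (hB : SmallAbove g σ B) :
    SmallAbove g σ {τ : List ℕ | BigAbove g τ B} :=
  fun hC => hB hC.of_bigClosure
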